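/- The heat flux λ ↦ J_λ is continuously differentiable on ℝ, with derivative J_λ' = -2λ·(1/4π)∫_{-π}^{π} j(cos k)·sin²k/(sin²k+λ²)² dk for λ ≠ 0 and J_0' = 0. -/

import Mathlib

/-!
Where `sin k ≠ 0` the magnetic correction at `e = cos k` equals `sin² k / (sin² k + λ²)`,
and where `sin k = 0` the flux density vanishes; so
`J_λ = (1/4π) ∫ j(cos k) sin² k / (sin² k + λ²) dk` for every `λ`, including `λ = 0`.
Since `|j(cos k)| ≤ |sin k|`, the `λ`-derivative of this integrand is bounded by
`2|λ| |sin k|³ / (sin² k + λ²)² ≤ 1`, so differentiation under the integral sign and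
continuity of the derivative both follow from dominated convergence.
-/

open Real intervalIntegral

noncomputable def planckDensity (r e : ℝ) : ℝ := 1 / (1 + Real.exp (r * e))

noncomputable def fluxDensity (βL βR e : ℝ) : ℝ :=
  e * Real.sqrt (1 - e ^ 2) * (planckDensity βL e - planckDensity βR e)

noncomputable def magneticCorrection (lam e : ℝ) : ℝ :=
  if lam = 0 then 1 else (1 - e ^ 2) / (1 - e ^ 2 + lam ^ 2)

noncomputable def heatFlux (βL βR lam : ℝ) : ℝ :=
  (1 / (4 * Real.pi)) *
    ∫ k in (-Real.pi)..Real.pi, fluxDensity βL βR (Real.cos k) * magneticCorrection lam (Real.cos k)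

noncomputable def heatFluxDeriv (βL βR lam : ℝ) : ℝ :=
  if lam = 0 then 0 else
    -2 * lam * ((1 / (4 * Real.pi)) *
      ∫ k in (-Real.pi)..Real.pi,
        fluxDensity βL βR (Real.cos k) * Real.sin k ^ 2 / (Real.sin k ^ 2 + lam ^ 2) ^ 2)

open MeasureTheory

section Weight

variable (s : ℝ)

-- At `s = 0` both sides are identically `0`, using Lean's `x / 0 = 0`.
theorem hasDerivAt_sq_div_sq_add_sq (l : ℝ) :
    HasDerivAt (fun l => s ^ 2 / (s ^ 2 + l ^ 2)) (-2 * l * s ^ 2 / (s ^ 2 + l ^ 2) ^ 2) l := by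
  rcases eq_or_ne s 0 with rfl | hs
  · simpa using hasDerivAt_const l (0 : ℝ)
  have hden : s ^ 2 + l ^ 2 ≠ 0 := by positivity
  refine ((hasDerivAt_const l (s ^ 2)).fun_div ((hasDerivAt_pow 2 l).const_add (s ^ 2))
    hden).congr_deriv ?_
  norm_num
  ring

theorem continuous_neg_two_mul_sq_div_sq_add_sq_sq :
    Continuous fun l : ℝ => -2 * l * s ^ 2 / (s ^ 2 + l ^ 2) ^ 2 := by
  rcases eq_or_ne s 0 with rfl | hs
  · simpa using continuous_const
  exact Continuous.div (by fun_prop) (by fun_prop) fun l => by positivity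

theorem sq_div_sq_add_sq_mem_Icc (l : ℝ) : s ^ 2 / (s ^ 2 + l ^ 2) ∈ Set.Icc (0 : ℝ) 1 :=
  ⟨by positivity, div_le_one_of_le₀ (by nlinarith [sq_nonneg l]) (by positivity)⟩

theorem two_mul_abs_mul_abs_pow_three_le (l : ℝ) : 2 * |l| * |s| ^ 3 ≤ (s ^ 2 + l ^ 2) ^ 2 := by
  rw [← sq_abs s, ← sq_abs l]
  nlinarith [mul_nonneg (sq_nonneg |s|) (sq_nonneg (|s| - |l|)), sq_nonneg (|s| * |l|),
    sq_nonneg (|l| ^ 2)]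

theorem abs_mul_neg_two_mul_sq_div_sq_add_sq_sq_le {c : ℝ} (hc : |c| ≤ |s|) (l : ℝ) :
    |c * (-2 * l * s ^ 2 / (s ^ 2 + l ^ 2) ^ 2)| ≤ 1 := by
  rcases eq_or_ne s 0 with rfl | hs
  · simp
  have hden : 0 < (s ^ 2 + l ^ 2) ^ 2 := by positivity
  rw [abs_mul, abs_div, abs_of_pos hden, mul_div_assoc', div_le_one hden]
  calc |c| * |-2 * l * s ^ 2| ≤ |s| * (2 * |l| * |s| ^ 2) := by
        rw [abs_mul, abs_mul, abs_pow]; norm_num; gcongr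
    _ = 2 * |l| * |s| ^ 3 := by ring
    _ ≤ (s ^ 2 + l ^ 2) ^ 2 := two_mul_abs_mul_abs_pow_three_le s l

end Weight

section ParametricIntegral

variable {f s : ℝ → ℝ} {a b : ℝ}

theorem hasDerivAt_integral_mul_sq_div_sq_add_sq (hf : IntervalIntegrable f volume a b)
    (hs : Measurable s) (hfs : ∀ k, |f k| ≤ |s k|) (lam : ℝ) :
    HasDerivAt (fun l => ∫ k in a..b, f k * (s k ^ 2 / (s k ^ 2 + l ^ 2)))
      (∫ k in a..b, f k * (-2 * lam * s k ^ 2 / (s k ^ 2 + lam ^ 2) ^ 2)) lam := by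
  have hf_meas := hf.def'.aestronglyMeasurable
  have hF_meas : ∀ l, AEStronglyMeasurable (fun k => f k * (s k ^ 2 / (s k ^ 2 + l ^ 2)))
      (volume.restrict (Set.uIoc a b)) := fun l =>
    hf_meas.mul (by fun_prop : Measurable _).aestronglyMeasurable
  have hF_int : IntervalIntegrable (fun k => f k * (s k ^ 2 / (s k ^ 2 + lam ^ 2))) volume a b := by
    rw [intervalIntegrable_iff] at hf ⊢
    refine hf.mul_bdd (c := 1) (by fun_prop : Measurable _).aestronglyMeasurable
      (ae_of_all _ fun k => ?_)
    obtain ⟨h_nonneg, h_le_one⟩ := sq_div_sq_add_sq_mem_Icc (s k) lam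
    rwa [Real.norm_of_nonneg h_nonneg]
  exact (intervalIntegral.hasDerivAt_integral_of_dominated_loc_of_deriv_le (bound := fun _ => 1)
    Filter.univ_mem (.of_forall hF_meas) hF_int
    (hf_meas.mul (by fun_prop : Measurable _).aestronglyMeasurable)
    (ae_of_all _ fun k _ l _ => abs_mul_neg_two_mul_sq_div_sq_add_sq_sq_le _ (hfs k) l)
    intervalIntegrable_const
    (ae_of_all _ fun k _ l _ => (hasDerivAt_sq_div_sq_add_sq (s k) l).const_mul (f k))).2

theorem continuous_integral_mul_neg_two_mul_sq_div_sq_add_sq_sq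
    (hf : IntervalIntegrable f volume a b) (hs : Measurable s) (hfs : ∀ k, |f k| ≤ |s k|) :
    Continuous fun l => ∫ k in a..b, f k * (-2 * l * s k ^ 2 / (s k ^ 2 + l ^ 2) ^ 2) :=
  continuous_of_dominated_interval (bound := fun _ => 1)
    (fun _ => hf.def'.aestronglyMeasurable.mul (by fun_prop : Measurable _).aestronglyMeasurable)
    (fun l => ae_of_all _ fun k _ => abs_mul_neg_two_mul_sq_div_sq_add_sq_sq_le _ (hfs k) l)
    intervalIntegrable_const
    (ae_of_all _ fun k _ => continuous_const.mul
      (continuous_neg_two_mul_sq_div_sq_add_sq_sq (s k)))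

end ParametricIntegral

theorem planckDensity_mem_Icc (r e : ℝ) : planckDensity r e ∈ Set.Icc (0 : ℝ) 1 :=
  ⟨by unfold planckDensity; positivity,
    div_le_one_of_le₀ (by linarith [exp_pos (r * e)]) (by positivity)⟩

theorem continuous_planckDensity (r : ℝ) : Continuous (planckDensity r) :=
  continuous_const.div (by fun_prop) fun e => by positivity

theorem continuous_fluxDensity (βL βR : ℝ) : Continuous (fluxDensity βL βR) := by
  unfold fluxDensity
  have := continuous_planckDensity βL
  have := continuous_planckDensity βR
  fun_prop

theorem abs_fluxDensity_cos_le (βL βR k : ℝ) : |fluxDensity βL βR (cos k)| ≤ |sin k| := by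
  have hL := planckDensity_mem_Icc βL (cos k)
  have hR := planckDensity_mem_Icc βR (cos k)
  have hdiff : |planckDensity βL (cos k) - planckDensity βR (cos k)| ≤ 1 :=
    abs_sub_le_iff.2 ⟨by linarith [hL.2, hR.1], by linarith [hL.1, hR.2]⟩
  rw [fluxDensity, ← abs_sin_eq_sqrt_one_sub_cos_sq, abs_mul, abs_mul, abs_abs]
  calc |cos k| * |sin k| * |planckDensity βL (cos k) - planckDensity βR (cos k)|
      ≤ 1 * |sin k| * 1 := by gcongr; exact abs_cos_le_one k
    _ = |sin k| := by ring

theorem fluxDensity_cos_mul_magneticCorrection (βL βR lam k : ℝ) :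
    fluxDensity βL βR (cos k) * magneticCorrection lam (cos k) =
      fluxDensity βL βR (cos k) * (sin k ^ 2 / (sin k ^ 2 + lam ^ 2)) := by
  rw [magneticCorrection, ← sin_sq]
  split_ifs with hlam
  · rcases eq_or_ne (sin k) 0 with hs | hs
    · have := abs_fluxDensity_cos_le βL βR k
      rw [hs, abs_zero, abs_nonpos_iff] at this
      simp [this]
    · simp [hlam, hs]
  · rfl

theorem heatFlux_eq (βL βR lam : ℝ) :
    heatFlux βL βR lam = (1 / (4 * π)) *
      ∫ k in (-π)..π, fluxDensity βL βR (cos k) * (sin k ^ 2 / (sin k ^ 2 + lam ^ 2)) := by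
  simp only [heatFlux, fluxDensity_cos_mul_magneticCorrection]

theorem heatFluxDeriv_eq (βL βR lam : ℝ) :
    heatFluxDeriv βL βR lam = (1 / (4 * π)) *
      ∫ k in (-π)..π,
        fluxDensity βL βR (cos k) * (-2 * lam * sin k ^ 2 / (sin k ^ 2 + lam ^ 2) ^ 2) := by
  rw [heatFluxDeriv]
  split_ifs with hlam
  · simp [hlam]
  · simp only [← intervalIntegral.integral_const_mul]
    congr 1 with k
    ring

theorem heatFlux_C1_general (βL βR : ℝ) :
    (∀ lam : ℝ, HasDerivAt (fun l => heatFlux βL βR l) (heatFluxDeriv βL βR lam) lam) ∧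
    Continuous (fun lam => heatFluxDeriv βL βR lam) := by
  have hj : IntervalIntegrable (fun k => fluxDensity βL βR (cos k)) volume (-π) π :=
    ((continuous_fluxDensity βL βR).comp continuous_cos).intervalIntegrable _ _
  have hbound := abs_fluxDensity_cos_le βL βR
  simp only [heatFlux_eq, heatFluxDeriv_eq]
  exact ⟨fun lam =>
      (hasDerivAt_integral_mul_sq_div_sq_add_sq hj measurable_sin hbound lam).const_mul _,
    continuous_const.mul
      (continuous_integral_mul_neg_two_mul_sq_div_sq_add_sq_sq hj measurable_sin hbound)⟩

theorem heatFlux_C1 (βL βR : ℝ) (hL : 0 < βL) (hLR : βL < βR) :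
    (∀ lam : ℝ, HasDerivAt (fun l => heatFlux βL βR l) (heatFluxDeriv βL βR lam) lam) ∧
    Continuous (fun lam => heatFluxDeriv βL βR lam) :=
  heatFlux_C1_general βL βR
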